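/- If S and T are left C4*-rings, then the direct product ring S × T is a left C4*-ring. -/

import Mathlib

open MulOpposite

section C4Defs

/-- A submodule is a direct summand if it has a complement. -/
def IsDirectSummand {R M : Type*} [Ring R] [AddCommGroup M] [Module R M]
    (A : Submodule R M) : Prop :=
  ∃ B : Submodule R M, IsCompl A B

/-- `M` is a `C4`-module over `R`: for every internal direct sum decomposition `M = A ⊕ B`
and every homomorphism `f : A → B` whose kernel is a direct summand of `A`, the image of `f`
is a direct summand of `B`. -/
def IsC4Module (R M : Type*) [Ring R] [AddCommGroup M] [Module R M] : Prop :=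
  ∀ A B : Submodule R M, IsCompl A B → ∀ f : A →ₗ[R] B,
    IsDirectSummand (LinearMap.ker f) → IsDirectSummand (LinearMap.range f)

/-- `M` is a `C4*`-module: every submodule of `M` is a `C4`-module. -/
def IsC4StarModule (R M : Type*) [Ring R] [AddCommGroup M] [Module R M] : Prop :=
  ∀ N : Submodule R M, IsC4Module R N

/-- `M` is square-free: no nonzero submodules `A`, `B` with `A ⊓ B = ⊥` and `A ≅ B`. -/
def IsSquareFreeModule (R M : Type*) [Ring R] [AddCommGroup M] [Module R M] : Prop :=
  ∀ A B : Submodule R M, A ≠ ⊥ → B ≠ ⊥ → A ⊓ B = ⊥ → IsEmpty (A ≃ₗ[R] B)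

/-- `M` is summand-square-free: no nonzero direct summands `A`, `B` with `A ⊓ B = ⊥`
and `A ≅ B`. -/
def IsSummandSquareFree (R M : Type*) [Ring R] [AddCommGroup M] [Module R M] : Prop :=
  ∀ A B : Submodule R M, IsDirectSummand A → IsDirectSummand B →
    A ≠ ⊥ → B ≠ ⊥ → A ⊓ B = ⊥ → IsEmpty (A ≃ₗ[R] B)

/-- `X` is an essential submodule of `A`. -/
def IsEssentialIn {R M : Type*} [Ring R] [AddCommGroup M] [Module R M]
    (X A : Submodule R M) : Prop :=
  X ≤ A ∧ ∀ N : Submodule R M, N ≤ A → N ≠ ⊥ → X ⊓ N ≠ ⊥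

/-- A triple `(X, Y, f)` where `X`, `Y` are semisimple direct summands of `M` with
`X ⊓ Y = ⊥` and `f : X ≅ Y` an isomorphism.  These are the elements of the poset `S(M)`
from the definition of semi-weak-CS modules. -/
structure SWTriple (R M : Type*) [Ring R] [AddCommGroup M] [Module R M] where
  X : Submodule R M
  Y : Submodule R M
  semisimpleX : IsSemisimpleModule R X
  semisimpleY : IsSemisimpleModule R Y
  summandX : IsDirectSummand X
  summandY : IsDirectSummand Y
  disj : X ⊓ Y = ⊥
  f : X ≃ₗ[R] Y

/-- The extension order on the poset `S(M)` of triples: `(X₁,Y₁,f₁) ≤ (X₂,Y₂,f₂)` iff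
`X₁ ≤ X₂`, `Y₁ ≤ Y₂` and `f₂` restricts to `f₁` on `X₁`. -/
def SWTriple.Extends {R M : Type*} [Ring R] [AddCommGroup M] [Module R M]
    (t s : SWTriple R M) : Prop :=
  ∃ hX : t.X ≤ s.X, t.Y ≤ s.Y ∧
    ∀ x : t.X, (s.f ⟨x.1, hX x.2⟩ : M) = (t.f x : M)

/-- `M` is semi-weak-CS: for every chain in the poset `S(M)`, with `X` the union of the first
components and `Y` the union of the second components, there are direct summands `A`, `B`
of `M` with `X` essential in `A` and `Y` essential in `B`. -/
def IsSemiWeakCS (R M : Type*) [Ring R] [AddCommGroup M] [Module R M] : Prop :=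
  ∀ C : Set (SWTriple R M), IsChain SWTriple.Extends C →
    ∃ A B : Submodule R M, IsDirectSummand A ∧ IsDirectSummand B ∧
      IsEssentialIn (⨆ t ∈ C, t.X) A ∧ IsEssentialIn (⨆ t ∈ C, t.Y) B

/-- `M` is strongly `C4*` if it is both semi-weak-CS and `C4*`. -/
def IsStronglyC4StarModule (R M : Type*) [Ring R] [AddCommGroup M] [Module R M] : Prop :=
  IsSemiWeakCS R M ∧ IsC4StarModule R M

/-- `R` is a right `C4*`-ring: the right regular module `R_R` (i.e. `R` as a module over
`Rᵐᵒᵖ`) is a `C4*`-module. -/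
def IsRightC4StarRing (R : Type*) [Ring R] : Prop := IsC4StarModule Rᵐᵒᵖ R

/-- `R` is a left `C4*`-ring: the left regular module `_RR` is a `C4*`-module. -/
def IsLeftC4StarRing (R : Type*) [Ring R] : Prop := IsC4StarModule R R

/-- `R` is a strongly right `C4*`-ring. -/
def IsStronglyRightC4StarRing (R : Type*) [Ring R] : Prop := IsStronglyC4StarModule Rᵐᵒᵖ R

/-- `R` is a strongly left `C4*`-ring. -/
def IsStronglyLeftC4StarRing (R : Type*) [Ring R] : Prop := IsStronglyC4StarModule R R

/-- `R` is right semi-weak-CS. -/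
def IsRightSemiWeakCSRing (R : Type*) [Ring R] : Prop := IsSemiWeakCS Rᵐᵒᵖ R

/-- `R` is left semi-weak-CS. -/
def IsLeftSemiWeakCSRing (R : Type*) [Ring R] : Prop := IsSemiWeakCS R R

/-- The left square-free transfer condition `LSF`: if the right regular module `T_T` is
summand-square-free then the left regular module `_TT` is square-free. -/
def LSF (T : Type*) [Ring T] : Prop :=
  IsSummandSquareFree Tᵐᵒᵖ T → IsSquareFreeModule T T

end C4Defs

section Corner

variable {T : Type*} [Ring T]

/-- The corner `eTe = {x : T | e * x = x ∧ x * e = x}` as a non-unital subring. -/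
def cornerSubring (e : T) : NonUnitalSubring T where
  carrier := {x : T | e * x = x ∧ x * e = x}
  add_mem' := by
    rintro a b ⟨ha1, ha2⟩ ⟨hb1, hb2⟩
    exact ⟨by rw [mul_add, ha1, hb1], by rw [add_mul, ha2, hb2]⟩
  zero_mem' := ⟨mul_zero e, zero_mul e⟩
  neg_mem' := by
    rintro a ⟨ha1, ha2⟩
    exact ⟨by rw [mul_neg, ha1], by rw [neg_mul, ha2]⟩
  mul_mem' := by
    rintro a b ⟨ha1, ha2⟩ ⟨hb1, hb2⟩
    exact ⟨by rw [← mul_assoc, ha1], by rw [mul_assoc, hb2]⟩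

theorem mem_cornerSubring {e x : T} :
    x ∈ cornerSubring e ↔ e * x = x ∧ x * e = x := Iff.rfl

/-- The corner ring `eTe` associated to an idempotent `e` of `T`; its identity is `e`. -/
def Corner (e : T) (he : IsIdempotentElem e) : Type _ := ↥(cornerSubring e)

instance {e : T} {he : IsIdempotentElem e} : Ring (Corner e he) :=
  { (inferInstanceAs (NonUnitalRing ↥(cornerSubring e)) : NonUnitalRing ↥(cornerSubring e)) with
    one := ⟨e, he, he⟩
    one_mul := fun x => Subtype.ext (mem_cornerSubring.mp x.2).1
    mul_one := fun x => Subtype.ext (mem_cornerSubring.mp x.2).2 }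

/-- `eT = {x : T | e * x = x}` as an additive subgroup; it is a left module over the
corner ring `eTe`. -/
def leftPart (e : T) : AddSubgroup T where
  carrier := {x : T | e * x = x}
  add_mem' := by
    intro a b ha hb
    simp only [Set.mem_setOf_eq] at *
    rw [mul_add, ha, hb]
  zero_mem' := mul_zero e
  neg_mem' := by
    intro a ha
    simp only [Set.mem_setOf_eq] at *
    rw [mul_neg, ha]

/-- `Te = {x : T | x * e = x}` as an additive subgroup; it is a right module over the
corner ring `eTe`. -/
def rightPart (e : T) : AddSubgroup T where
  carrier := {x : T | x * e = x}
  add_mem' := by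
    intro a b ha hb
    simp only [Set.mem_setOf_eq] at *
    rw [add_mul, ha, hb]
  zero_mem' := zero_mul e
  neg_mem' := by
    intro a ha
    simp only [Set.mem_setOf_eq] at *
    rw [neg_mul, ha]

theorem mem_leftPart {e x : T} : x ∈ leftPart e ↔ e * x = x := Iff.rfl

theorem mem_rightPart {e x : T} : x ∈ rightPart e ↔ x * e = x := Iff.rfl

/-- `eT` is a (unital) left module over the corner ring `eTe`. -/
instance {e : T} {he : IsIdempotentElem e} : Module (Corner e he) ↥(leftPart e) where
  smul c x := ⟨c.1 * x.1, by
    have h1 : e * c.1 = c.1 := (mem_cornerSubring.mp c.2).1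
    show e * (c.1 * x.1) = c.1 * x.1
    rw [← mul_assoc, h1]⟩
  one_smul x := Subtype.ext (by
    show e * x.1 = x.1
    exact mem_leftPart.mp x.2)
  mul_smul a b x := Subtype.ext (by
    show (a.1 * b.1) * x.1 = a.1 * (b.1 * x.1)
    rw [mul_assoc])
  smul_zero a := Subtype.ext (by
    show a.1 * 0 = 0
    exact mul_zero _)
  smul_add a x y := Subtype.ext (by
    show a.1 * (x.1 + y.1) = a.1 * x.1 + a.1 * y.1
    exact mul_add _ _ _)
  add_smul a b x := Subtype.ext (by
    show (a.1 + b.1) * x.1 = a.1 * x.1 + b.1 * x.1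
    exact add_mul _ _ _)
  zero_smul x := Subtype.ext (by
    show (0 : T) * x.1 = 0
    exact zero_mul _)

/-- `Te` is a (unital) right module over the corner ring `eTe`, i.e. a module over
`(eTe)ᵐᵒᵖ`. -/
instance {e : T} {he : IsIdempotentElem e} : Module (Corner e he)ᵐᵒᵖ ↥(rightPart e) where
  smul c x := ⟨x.1 * (unop c).1, by
    have h2 : (unop c).1 * e = (unop c).1 := (mem_cornerSubring.mp (unop c).2).2
    show (x.1 * (unop c).1) * e = x.1 * (unop c).1
    rw [mul_assoc, h2]⟩
  one_smul x := Subtype.ext (by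
    show x.1 * e = x.1
    exact mem_rightPart.mp x.2)
  mul_smul a b x := Subtype.ext (by
    show x.1 * ((unop b).1 * (unop a).1) = (x.1 * (unop b).1) * (unop a).1
    rw [mul_assoc])
  smul_zero a := Subtype.ext (by
    show (0 : T) * (unop a).1 = 0
    exact zero_mul _)
  smul_add a x y := Subtype.ext (by
    show (x.1 + y.1) * (unop a).1 = x.1 * (unop a).1 + y.1 * (unop a).1
    exact add_mul _ _ _)
  add_smul a b x := Subtype.ext (by
    show x.1 * ((unop a).1 + (unop b).1) = x.1 * (unop a).1 + x.1 * (unop b).1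
    exact mul_add _ _ _)
  zero_smul x := Subtype.ext (by
    show x.1 * (0 : T) = 0
    exact mul_zero _)

/-- The hereditary side-transfer condition `HST`: for every idempotent `e` of `T`, if the
module `eT`/`Te` is summand-square-free as a right `eTe`-module (formalized on the carrier
`Te = rightPart e`, which carries the unital right `eTe`-action; at `e = 1` this is the right
regular module `T_T`), then the left `eTe`-module (carrier `eT = leftPart e`, carrying the
unital left `eTe`-action; at `e = 1` this is the left regular module `_TT`) is square-free. -/
def HST (T : Type*) [Ring T] : Prop :=
  ∀ (e : T) (he : IsIdempotentElem e),
    IsSummandSquareFree (Corner e he)ᵐᵒᵖ ↥(rightPart e) →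
      IsSquareFreeModule (Corner e he) ↥(leftPart e)

/-- The corner-stability axiom `CSA`: for every idempotent `e` of `T`, the left regular
module of the corner ring `eTe` is semi-weak-CS. -/
def CSA' (T : Type*) [Ring T] : Prop :=
  ∀ (e : T) (he : IsIdempotentElem e),
    IsSemiWeakCS (Corner e he) (Corner e he)

end Corner

section SymmetryDatum

/-- A right-to-left symmetry datum on `R`: a ring decomposition `R ≅ S × T` where `S` is
semisimple artinian, the right regular module `T_T` is summand-square-free, the two ideals
`S`, `T` are orthogonal as right `R`-modules (no nonzero isomorphic right `R`-submodules),
and `T` satisfies `HST` and `CSA`. -/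
structure RightToLeftSymmetryDatum (R S T : Type*) [Ring R] [Ring S] [Ring T] where
  iso : R ≃+* S × T
  semisimpleArtinian : IsSemisimpleRing S
  ssf : IsSummandSquareFree Tᵐᵒᵖ T
  orthogonal : ∀ A B : Submodule Rᵐᵒᵖ R,
    (∀ a ∈ A, (iso a).2 = 0) → (∀ b ∈ B, (iso b).1 = 0) →
    A ≠ ⊥ → B ≠ ⊥ → IsEmpty (A ≃ₗ[Rᵐᵒᵖ] B)
  hst : HST T
  csa : CSA' T

end SymmetryDatum

section Beta

variable (R : Type*) [Ring R]

/-- The right annihilator `r_R(P) = {s : R | P s = 0}` of a right submodule `P` of `R`. -/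
def rightAnnSet (P : Submodule Rᵐᵒᵖ R) : Set R := {s : R | ∀ p ∈ P, p * s = 0}

/-- The annihilator-bidual `β_r(P) = ℓ_R(r_R(P))`, as a right ideal of `R`. -/
def betaR (P : Submodule Rᵐᵒᵖ R) : Submodule Rᵐᵒᵖ R where
  carrier := {r : R | ∀ s ∈ rightAnnSet R P, r * s = 0}
  add_mem' := by
    intro a b ha hb
    intro s hs
    rw [add_mul, ha s hs, hb s hs, add_zero]
  zero_mem' := by
    intro s hs
    exact zero_mul s
  smul_mem' := by
    intro c x hx s hs
    show (x * unop c) * s = 0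
    rw [mul_assoc]
    refine hx _ ?_
    intro p hp
    rw [← mul_assoc]
    exact hs (p * unop c) (Submodule.smul_mem P c hp)

/-- A right ideal is a two-sided ideal which is a ring direct summand of `R` iff it is of
the form `cR` for a central idempotent `c`. -/
def IsRingDirectSummandIdeal {R : Type*} [Ring R] (I : Submodule Rᵐᵒᵖ R) : Prop :=
  ∃ c : R, IsIdempotentElem c ∧ (∀ r : R, c * r = r * c) ∧ (∀ x : R, x ∈ I ↔ c * x = x)

/-- `R` has right semisimple annihilator asymmetry. -/
def HasRightSemisimpleAnnihilatorAsymmetry (R : Type*) [Ring R] : Prop :=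
  ∃ P : Submodule Rᵐᵒᵖ R, IsSemisimpleModule Rᵐᵒᵖ P ∧ IsDirectSummand P ∧
    (¬ IsSemisimpleModule Rᵐᵒᵖ (betaR R P) ∨
     (IsSemisimpleModule Rᵐᵒᵖ (betaR R P) ∧ ¬ IsRingDirectSummandIdeal (betaR R P)) ∨
     ¬ IsEssentialIn P (betaR R P))

end Beta

/-!
Put `e = (1, 0)`, a central idempotent of `S × T`. Every `S × T`-module `M` is the direct sum of
its Peirce components `eM` and `(1 - e)M`; since `e` is central, every submodule and every
homomorphism between submodules splits along this decomposition, and a submodule is a direct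
summand exactly when both of its components are. Hence `M` is C4 once `eM` and `(1 - e)M` are.
For a left ideal `N` of `S × T`, the first projection maps `eN` bijectively onto a left ideal of
`S`, semilinearly over the surjection `S × T → S`, and the C4 property transfers along such maps;
likewise `(1 - e)N` and `T`.
-/

open Function LinearMap Submodule

section Complemented

variable {α β : Type*} [Lattice α] [BoundedOrder α] [Lattice β] [BoundedOrder β]

theorem OrderIso.isComplemented_apply (f : α ≃o β) {a : α} :
    IsComplemented (f a) ↔ IsComplemented a := by
  refine ⟨fun ⟨b, hb⟩ => ⟨f.symm b, ?_⟩, fun ⟨b, hb⟩ => ⟨f b, f.isCompl hb⟩⟩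
  simpa using f.symm.isCompl hb

theorem Prod.isComplemented_iff {x : α × β} :
    IsComplemented x ↔ IsComplemented x.1 ∧ IsComplemented x.2 := by
  refine ⟨fun ⟨y, hy⟩ => ?_, fun ⟨⟨y₁, h₁⟩, ⟨y₂, h₂⟩⟩ =>
    ⟨(y₁, y₂), Prod.isCompl_iff.2 ⟨h₁, h₂⟩⟩⟩
  obtain ⟨h₁, h₂⟩ := Prod.isCompl_iff.1 hy
  exact ⟨⟨_, h₁⟩, ⟨_, h₂⟩⟩

end Complemented

section Semilinear

variable {R R' M M' : Type*} [Ring R] [Ring R'] [AddCommGroup M] [Module R M]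
  [AddCommGroup M'] [Module R' M'] {σ : R →+* R'} [RingHomSurjective σ]

theorem isDirectSummand_map_iff {φ : M →ₛₗ[σ] M'} (hφ : Bijective φ) {X : Submodule R M} :
    IsDirectSummand (X.map φ) ↔ IsDirectSummand X :=
  (orderIsoMapComapOfBijective φ hφ).isComplemented_apply

noncomputable def LinearMap.transport {N' : Type*} [AddCommGroup N'] [Module R' N']
    {φ : M →ₛₗ[σ] M'} (hφ : Bijective φ) (g : M →ₛₗ[σ] N') : M' →ₗ[R'] N' where
  toFun x := g ((Equiv.ofBijective φ hφ).symm x)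
  map_add' x y := by
    obtain ⟨x, rfl⟩ := hφ.2 x
    obtain ⟨y, rfl⟩ := hφ.2 y
    rw [← map_add φ]
    simp only [Equiv.ofBijective_symm_apply_apply]
    exact map_add g x y
  map_smul' r x := by
    obtain ⟨r, rfl⟩ := RingHomSurjective.is_surjective (σ := σ) r
    obtain ⟨x, rfl⟩ := hφ.2 x
    rw [← map_smulₛₗ φ]
    simp only [Equiv.ofBijective_symm_apply_apply]
    exact map_smulₛₗ g r x

theorem LinearMap.transport_comp {N' : Type*} [AddCommGroup N'] [Module R' N']
    {φ : M →ₛₗ[σ] M'} (hφ : Bijective φ) (g : M →ₛₗ[σ] N') : (transport hφ g).comp φ = g :=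
  LinearMap.ext fun x => congrArg g ((Equiv.ofBijective φ hφ).symm_apply_apply x)

variable {A B A' B' : Type*} [AddCommGroup A] [Module R A] [AddCommGroup B] [Module R B]
  [AddCommGroup A'] [Module R' A'] [AddCommGroup B'] [Module R' B']

theorem isDirectSummand_range_of_comp_eq {φA : A →ₛₗ[σ] A'} {φB : B →ₛₗ[σ] B'}
    (hφA : Bijective φA) (hφB : Bijective φB) {f : A →ₗ[R] B} {f' : A' →ₗ[R'] B'}
    (h : f'.comp φA = φB.comp f)
    (hf' : IsDirectSummand (ker f') → IsDirectSummand (range f'))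
    (hker : IsDirectSummand (ker f)) : IsDirectSummand (range f) := by
  have hker' : ker f' = (ker f).map φA := by
    rw [← map_comap_eq_of_surjective hφA.2 (ker f'), ← ker_comp, h,
      ker_comp_of_ker_eq_bot _ (ker_eq_bot.2 hφB.1)]
  have hrange' : range f' = (range f).map φB := by
    rw [← range_comp_of_range_eq_top f' (range_eq_top.2 hφA.2), h, range_comp]
  rw [← isDirectSummand_map_iff hφB, ← hrange']
  exact hf' (hker' ▸ (isDirectSummand_map_iff hφA).2 hker)

theorem IsC4Module.of_bijective (h : IsC4Module R' M') {φ : M →ₛₗ[σ] M'} (hφ : Bijective φ) :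
    IsC4Module R M := by
  intro A B hAB f
  have hres : ∀ X : Submodule R M, Bijective (φ.submoduleMap X) :=
    fun X => ⟨submoduleMap_injective hφ.1 X, submoduleMap_surjective φ X⟩
  exact isDirectSummand_range_of_comp_eq (hres A) (hres B) (transport_comp (hres A) _)
    (h _ _ ((orderIsoMapComapOfBijective φ hφ).isCompl hAB) _)

theorem IsC4StarModule.isC4Module_of_injective (h : IsC4StarModule R' M') {φ : M →ₛₗ[σ] M'}
    (hφ : Injective φ) : IsC4Module R M :=
  (h (range φ)).of_bijective ⟨(injective_rangeRestrict_iff φ).2 hφ, φ.surjective_rangeRestrict⟩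

end Semilinear

theorem Submodule.comap_subtype_map_subtype_sup {R M : Type*} [Ring R] [AddCommGroup M]
    [Module R M] {p q : Submodule R M} (h : Disjoint p q) (Y : Submodule R p)
    (Z : Submodule R q) : (Y.map p.subtype ⊔ Z.map q.subtype).comap p.subtype = Y := by
  refine le_antisymm (fun y hy => ?_) (by rw [← map_le_iff_le_comap]; exact le_sup_left)
  obtain ⟨_, ⟨a, ha, rfl⟩, _, ⟨b, -, rfl⟩, hab⟩ := mem_sup.1 (mem_comap.1 hy)
  have hb : (b : M) = 0 := by
    refine (disjoint_def.1 h) b ?_ b.2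
    rw [show (b : M) = y - a from eq_sub_of_add_eq' hab]
    exact p.sub_mem y.2 a.2
  obtain rfl : a = y := Subtype.ext (by simpa [hb] using hab)
  exact ha

section Peirce

variable {R : Type*} [Ring R] {e : R}

/-- The Peirce component `eM = {x | e • x = x}`, for `e` a central idempotent. -/
def peircePart (hc : e ∈ Subring.center R) (M : Type*) [AddCommGroup M] [Module R M] :
    Submodule R M where
  carrier := {x | e • x = x}
  add_mem' {x y} hx hy := by
    show e • (x + y) = x + y
    rw [smul_add, hx, hy]
  zero_mem' := smul_zero e
  smul_mem' r x hx := by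
    show e • r • x = r • x
    rw [smul_smul, ← Subring.mem_center_iff.1 hc r, mul_smul, hx]

variable {M : Type*} [AddCommGroup M] [Module R M]

theorem mem_peircePart {hc : e ∈ Subring.center R} {x : M} :
    x ∈ peircePart hc M ↔ e • x = x :=
  Iff.rfl

theorem one_sub_mem_center (hc : e ∈ Subring.center R) : 1 - e ∈ Subring.center R :=
  Subring.sub_mem _ (Subring.one_mem _) hc

variable (hc : e ∈ Subring.center R)

theorem smul_mem_peircePart (he : IsIdempotentElem e) (x : M) : e • x ∈ peircePart hc M := by
  rw [mem_peircePart, smul_smul, he.eq]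

theorem disjoint_peircePart (he : IsIdempotentElem e) :
    Disjoint (peircePart hc M) (peircePart (one_sub_mem_center hc) M) := by
  rw [disjoint_iff, eq_bot_iff]
  intro x hx
  obtain ⟨hx, hx'⟩ := mem_inf.1 hx
  rw [mem_peircePart] at hx hx'
  rw [mem_bot, ← hx, ← hx', smul_smul, mul_sub, mul_one, he.eq, sub_self, zero_smul]

/-- Every submodule `K` splits as `eK ⊕ (1 - e)K`, because `e` is central. -/
def peirceOrderIso (he : IsIdempotentElem e) : Submodule R M ≃o
    Submodule R (peircePart hc M) × Submodule R (peircePart (one_sub_mem_center hc) M) :=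
  let p := peircePart hc M
  let q := peircePart (one_sub_mem_center hc) M
  Equiv.toOrderIso
    { toFun K := (K.comap p.subtype, K.comap q.subtype)
      invFun Y := Y.1.map p.subtype ⊔ Y.2.map q.subtype
      left_inv K := by
        simp only [map_comap_subtype]
        refine le_antisymm (sup_le inf_le_right inf_le_right) fun x hx => ?_
        refine mem_sup.2 ⟨e • x, ⟨smul_mem_peircePart hc he x, K.smul_mem e hx⟩,
          (1 - e) • x, ⟨smul_mem_peircePart _ he.one_sub x, K.smul_mem _ hx⟩, ?_⟩
        rw [sub_smul, one_smul, add_sub_cancel]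
      right_inv Y := by
        refine Prod.ext (comap_subtype_map_subtype_sup (disjoint_peircePart hc he) _ _) ?_
        exact (congrArg _ (sup_comm _ _)).trans <|
          comap_subtype_map_subtype_sup (disjoint_peircePart hc he).symm _ _ }
    (fun _ _ h => ⟨comap_mono h, comap_mono h⟩)
    (fun _ _ h => sup_le_sup (map_mono h.1) (map_mono h.2))

theorem IsCompl.comap_peircePart (he : IsIdempotentElem e) {A B : Submodule R M}
    (h : IsCompl A B) :
    IsCompl (A.comap (peircePart hc M).subtype) (B.comap (peircePart hc M).subtype) :=
  (Prod.isCompl_iff.1 ((peirceOrderIso hc he).isCompl h)).1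

theorem isDirectSummand_iff_comap_peircePart (he : IsIdempotentElem e) {K : Submodule R M} :
    IsDirectSummand K ↔ IsDirectSummand (K.comap (peircePart hc M).subtype) ∧
      IsDirectSummand (K.comap (peircePart (one_sub_mem_center hc) M).subtype) :=
  (peirceOrderIso hc he).isComplemented_apply.symm.trans Prod.isComplemented_iff

def peircePartEquiv (X : Submodule R M) :
    peircePart hc X ≃ₗ[R] X.comap (peircePart hc M).subtype where
  toFun x := ⟨⟨x.1.1, congrArg Subtype.val x.2⟩, x.1.2⟩
  invFun y := ⟨⟨y.1.1, y.2⟩, Subtype.ext y.1.2⟩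
  map_add' _ _ := rfl
  map_smul' _ _ := rfl
  left_inv _ := rfl
  right_inv _ := rfl

variable {A B : Type*} [AddCommGroup A] [Module R A] [AddCommGroup B] [Module R B]

def LinearMap.peirceRestrict (f : A →ₗ[R] B) : peircePart hc A →ₗ[R] peircePart hc B :=
  f.restrict fun x hx => by rw [mem_peircePart, ← map_smul, hx]

theorem LinearMap.range_peirceRestrict (he : IsIdempotentElem e) (f : A →ₗ[R] B) :
    range (f.peirceRestrict hc) = (range f).comap (peircePart hc B).subtype := by
  refine le_antisymm ?_ fun y ⟨x, hx⟩ => ⟨⟨e • x, smul_mem_peircePart hc he x⟩, ?_⟩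
  · rw [peirceRestrict, range_restrict]
    exact comap_mono map_le_range
  · ext
    show f (e • x) = y
    rw [map_smul, hx]
    exact y.2

theorem IsC4Module.isDirectSummand_range_peircePart (hW : IsC4Module R (peircePart hc M))
    (he : IsIdempotentElem e) {A B : Submodule R M} (hAB : IsCompl A B) (f : A →ₗ[R] B)
    (hker : IsDirectSummand (ker f)) :
    IsDirectSummand ((range f).comap (peircePart hc B).subtype) := by
  rw [← f.range_peirceRestrict hc he]
  let ψA := peircePartEquiv hc A
  let ψB := peircePartEquiv hc B
  refine isDirectSummand_range_of_comp_eq ψA.bijective ψB.bijective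
    (f' := ψB.toLinearMap ∘ₗ f.peirceRestrict hc ∘ₗ ψA.symm.toLinearMap) ?_
    (hW _ _ (hAB.comap_peircePart hc he) _) ?_
  · ext x
    simp
  · rw [peirceRestrict, ker_restrict]
    exact ((isDirectSummand_iff_comap_peircePart hc he).1 hker).1

theorem IsC4Module.of_peircePart (he : IsIdempotentElem e)
    (h₁ : IsC4Module R (peircePart hc M))
    (h₂ : IsC4Module R (peircePart (one_sub_mem_center hc) M)) : IsC4Module R M :=
  fun _ _ hAB f hker => (isDirectSummand_iff_comap_peircePart hc he).2
    ⟨h₁.isDirectSummand_range_peircePart hc he hAB f hker,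
      h₂.isDirectSummand_range_peircePart _ he.one_sub hAB f hker⟩

end Peirce

section Product

theorem Prod.one_zero_mem_center (S T : Type*) [Ring S] [Ring T] :
    ((1, 0) : S × T) ∈ Subring.center (S × T) :=
  Subring.mem_center_iff.2 fun _ => by ext <;> simp

variable {S T : Type*} [Ring S] [Ring T]

theorem Prod.isIdempotentElem_one_zero : IsIdempotentElem ((1, 0) : S × T) := by
  ext <;> simp

variable (N : Submodule (S × T) (S × T))

theorem injective_fst_peircePart :
    Injective ((RingHom.fst S T).toSemilinearMap ∘ₛₗ
      (N.subtype ∘ₗ (peircePart (Prod.one_zero_mem_center S T) N).subtype)) := by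
  have hsnd : ∀ x : peircePart (Prod.one_zero_mem_center S T) N, (x : S × T).2 = 0 :=
    fun x => by simpa using (congrArg (fun y : N => (y : S × T).2) x.2).symm
  exact fun x y hxy => Subtype.ext <| Subtype.ext <| Prod.ext hxy ((hsnd x).trans (hsnd y).symm)

theorem injective_snd_peircePart :
    Injective ((RingHom.snd S T).toSemilinearMap ∘ₛₗ (N.subtype ∘ₗ
      (peircePart (one_sub_mem_center (Prod.one_zero_mem_center S T)) N).subtype)) := by
  have hfst : ∀ x : peircePart (one_sub_mem_center (Prod.one_zero_mem_center S T)) N,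
      (x : S × T).1 = 0 :=
    fun x => by simpa using (congrArg (fun y : N => (y : S × T).1) x.2).symm
  exact fun x y hxy => Subtype.ext <| Subtype.ext <| Prod.ext ((hfst x).trans (hfst y).symm) hxy

end Product

/-- If `S` and `T` are left `C4*`-rings, then `S × T` is a left `C4*`-ring. -/
theorem left_product_c4star {S T : Type*} [Ring S] [Ring T]
    (hS : IsLeftC4StarRing S) (hT : IsLeftC4StarRing T) :
    IsLeftC4StarRing (S × T) := fun N =>
  IsC4Module.of_peircePart (Prod.one_zero_mem_center S T) Prod.isIdempotentElem_one_zero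
    (IsC4StarModule.isC4Module_of_injective hS (injective_fst_peircePart N))
    (IsC4StarModule.isC4Module_of_injective hT (injective_snd_peircePart N))
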